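/- Let d, M be positive integers, x_1, …, x_M ∈ ℝ^d, r_1, …, r_M ∈ ℝ, ζ > 0, ε > 0. Define O(w) = Σ_{i=1}^M min((r_i − ⟨x_i, w⟩)², ε) + ζ‖w‖² and u*(w)_i = 1 if (r_i − ⟨x_i, w⟩)² < ε, else 0. Let w⁽⁰⁾ ∈ ℝ^d and for t ≥ 0 set u⁽ᵗ⁾ = u*(w⁽ᵗ⁾) and w⁽ᵗ⁺¹⁾ = (Σ_{i=1}^M u_i⁽ᵗ⁾ x_i x_iᵀ + ζ I)⁻¹ (Σ_{i=1}^M u_i⁽ᵗ⁾ r_i x_i). Then the sequence (O(w⁽ᵗ⁾))_{t≥0} is nonincreasing and bounded below by 0, and hence converges to a limit L ≥ 0. -/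

import Mathlib

open scoped RealInnerProductSpace

/-! A majorize–minimize argument. For weights `c ∈ {0,1}ᴹ`, the weighted ridge loss
`∑ cᵢ (rᵢ - ⟪xᵢ, w⟫)² + ζ‖w‖²` plus the constant `∑ (1 - cᵢ) ε` majorizes the capped objective,
and the weights `u*(w)` make the majorant touch the objective at `w`. The update `w⁽ᵗ⁺¹⁾` solves the
normal equations of the weighted ridge problem with weights `u*(w⁽ᵗ⁾)`, so it minimizes the
majorant, whence `O(w⁽ᵗ⁺¹⁾) ≤ majorant(w⁽ᵗ⁺¹⁾) ≤ majorant(w⁽ᵗ⁾) = O(w⁽ᵗ⁾)`. A nonincreasing sequence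
of nonnegative reals converges to its infimum. -/

open Finset Matrix

variable {E ι : Type*} [NormedAddCommGroup E] [InnerProductSpace ℝ E]

section CapWeight

variable (x : ι → E) (r : ι → ℝ) (ε : ℝ)

noncomputable def capWeight (w : E) (i : ι) : ℝ :=
  if (r i - ⟪x i, w⟫) ^ 2 < ε then 1 else 0

variable {x r ε}

theorem capWeight_nonneg (w : E) (i : ι) : 0 ≤ capWeight x r ε w i := by
  unfold capWeight; split_ifs <;> norm_num

theorem min_le_capWeight_mul_add (w v : E) (i : ι) :
    min ((r i - ⟪x i, v⟫) ^ 2) ε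
      ≤ capWeight x r ε w i * (r i - ⟪x i, v⟫) ^ 2 + (1 - capWeight x r ε w i) * ε := by
  unfold capWeight
  split_ifs <;> simp

theorem min_eq_capWeight_mul_add (w : E) (i : ι) :
    min ((r i - ⟪x i, w⟫) ^ 2) ε
      = capWeight x r ε w i * (r i - ⟪x i, w⟫) ^ 2 + (1 - capWeight x r ε w i) * ε := by
  unfold capWeight
  split_ifs with hlt
  · simp [min_eq_left hlt.le]
  · simp [min_eq_right (not_lt.mp hlt)]

end CapWeight

section Loss

variable [Fintype ι] (x : ι → E) (r : ι → ℝ)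

def weightedRidgeLoss (c : ι → ℝ) (ζ : ℝ) (w : E) : ℝ :=
  ∑ i, c i * (r i - ⟪x i, w⟫) ^ 2 + ζ * ‖w‖ ^ 2

theorem weightedRidgeLoss_add (c : ι → ℝ) (ζ : ℝ) (p h : E) :
    weightedRidgeLoss x r c ζ (p + h) = weightedRidgeLoss x r c ζ p
      + 2 * ⟪∑ i, (c i * ⟪x i, p⟫) • x i + ζ • p - ∑ i, (c i * r i) • x i, h⟫
      + (∑ i, c i * ⟪x i, h⟫ ^ 2 + ζ * ‖h‖ ^ 2) := by
  have hsum : ∑ i, c i * (r i - ⟪x i, p + h⟫) ^ 2 = ∑ i, c i * (r i - ⟪x i, p⟫) ^ 2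
      + 2 * (∑ i, c i * ⟪x i, p⟫ * ⟪x i, h⟫ - ∑ i, c i * r i * ⟪x i, h⟫)
      + ∑ i, c i * ⟪x i, h⟫ ^ 2 := by
    simp only [mul_sum, ← sum_sub_distrib, ← sum_add_distrib]
    exact sum_congr rfl fun i _ => by rw [inner_add_right]; ring
  simp only [weightedRidgeLoss, hsum, norm_add_sq_real, inner_sub_left, inner_add_left, sum_inner,
    real_inner_smul_left]
  ring

theorem weightedRidgeLoss_le_of_normal_equation {c : ι → ℝ} {ζ : ℝ} (hc : ∀ i, 0 ≤ c i)
    (hζ : 0 ≤ ζ) {p : E} (hp : ∑ i, (c i * ⟪x i, p⟫) • x i + ζ • p = ∑ i, (c i * r i) • x i)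
    (v : E) : weightedRidgeLoss x r c ζ p ≤ weightedRidgeLoss x r c ζ v := by
  have hv := weightedRidgeLoss_add x r c ζ p (v - p)
  rw [add_sub_cancel, hp, sub_self, inner_zero_left] at hv
  have hquad : 0 ≤ ∑ i, c i * ⟪x i, v - p⟫ ^ 2 :=
    sum_nonneg fun i _ => mul_nonneg (hc i) (sq_nonneg _)
  linarith [mul_nonneg hζ (sq_nonneg ‖v - p‖)]

variable (ε ζ : ℝ)

def cappedRidgeLoss (w : E) : ℝ :=
  ∑ i, min ((r i - ⟪x i, w⟫) ^ 2) ε + ζ * ‖w‖ ^ 2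

variable {x r ε ζ}

theorem cappedRidgeLoss_le_of_weightedRidgeLoss_le {w v : E}
    (h : weightedRidgeLoss x r (capWeight x r ε w) ζ v
      ≤ weightedRidgeLoss x r (capWeight x r ε w) ζ w) :
    cappedRidgeLoss x r ε ζ v ≤ cappedRidgeLoss x r ε ζ w := by
  have majorant : cappedRidgeLoss x r ε ζ v
      ≤ weightedRidgeLoss x r (capWeight x r ε w) ζ v + ∑ i, (1 - capWeight x r ε w i) * ε := by
    unfold cappedRidgeLoss weightedRidgeLoss
    grw [sum_le_sum fun i _ => min_le_capWeight_mul_add w v i, sum_add_distrib]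
    linarith
  have touch : cappedRidgeLoss x r ε ζ w
      = weightedRidgeLoss x r (capWeight x r ε w) ζ w + ∑ i, (1 - capWeight x r ε w i) * ε := by
    simp only [cappedRidgeLoss, weightedRidgeLoss, min_eq_capWeight_mul_add w, sum_add_distrib]
    ring
  linarith

theorem cappedRidgeLoss_nonneg (hε : 0 ≤ ε) (hζ : 0 ≤ ζ) (w : E) :
    0 ≤ cappedRidgeLoss x r ε ζ w :=
  add_nonneg (sum_nonneg fun _ _ => le_min (sq_nonneg _) hε) (by positivity)

end Loss

section Euclidean

variable [Fintype ι] {d : ℕ} (x : ι → EuclideanSpace ℝ (Fin d))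

def ridgeMatrix (c : ι → ℝ) (ζ : ℝ) : Matrix (Fin d) (Fin d) ℝ :=
  ∑ i, c i • vecMulVec (x i) (x i) + ζ • 1

theorem ridgeMatrix_mulVec (c : ι → ℝ) (ζ : ℝ) (z : EuclideanSpace ℝ (Fin d)) :
    ridgeMatrix x c ζ *ᵥ z = WithLp.ofLp (∑ i, (c i * ⟪x i, z⟫) • x i + ζ • z) := by
  simp [ridgeMatrix, add_mulVec, sum_mulVec, smul_mulVec, vecMulVec_mulVec,
    EuclideanSpace.inner_eq_star_dotProduct, dotProduct_comm, mul_smul]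

theorem posDef_ridgeMatrix {c : ι → ℝ} (hc : ∀ i, 0 ≤ c i) {ζ : ℝ} (hζ : 0 < ζ) :
    (ridgeMatrix x c ζ).PosDef := by
  rw [ridgeMatrix, add_comm]
  refine (PosDef.one.smul hζ).add_posSemidef (posSemidef_sum _ fun i _ => ?_)
  simpa using (posSemidef_vecMulVec_self_star (WithLp.ofLp (x i))).smul (hc i)

theorem weightedRidgeLoss_le_of_ofLp_eq_ridgeMatrix_inv_mulVec {c : ι → ℝ} (hc : ∀ i, 0 ≤ c i)
    {ζ : ℝ} (hζ : 0 < ζ) (r : ι → ℝ) {p : EuclideanSpace ℝ (Fin d)}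
    (hp : WithLp.ofLp p = (ridgeMatrix x c ζ)⁻¹ *ᵥ ∑ i, c i • r i • WithLp.ofLp (x i))
    (v : EuclideanSpace ℝ (Fin d)) :
    weightedRidgeLoss x r c ζ p ≤ weightedRidgeLoss x r c ζ v := by
  have hdet : IsUnit (ridgeMatrix x c ζ).det :=
    (isUnit_iff_isUnit_det _).mp (posDef_ridgeMatrix x hc hζ).isUnit
  have normal : ridgeMatrix x c ζ *ᵥ p = ∑ i, c i • r i • WithLp.ofLp (x i) := by
    rw [hp, mulVec_mulVec, mul_nonsing_inv _ hdet, one_mulVec]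
  refine weightedRidgeLoss_le_of_normal_equation x r hc hζ.le (WithLp.ofLp_injective 2 ?_) v
  simpa [ridgeMatrix_mulVec, mul_smul] using normal

end Euclidean

theorem stmt_16_general (d M : ℕ)
    (x : Fin M → EuclideanSpace ℝ (Fin d)) (r : Fin M → ℝ)
    (ζ ε : ℝ) (hζ : 0 < ζ) (hε : 0 < ε)
    (O : EuclideanSpace ℝ (Fin d) → ℝ)
    (hO : ∀ w', O w' = (∑ i, min ((r i - ⟪x i, w'⟫) ^ 2) ε) + ζ * ‖w'‖ ^ 2)
    (w : ℕ → EuclideanSpace ℝ (Fin d)) (u : ℕ → Fin M → ℝ)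
    (hu : ∀ t i, u t i = if (r i - ⟪x i, w t⟫) ^ 2 < ε then 1 else 0)
    (hw : ∀ t, w (t + 1) =
      ((∑ i, u t i • Matrix.vecMulVec (x i) (x i)) +
        ζ • (1 : Matrix (Fin d) (Fin d) ℝ))⁻¹.mulVec (∑ i, u t i • r i • x i)) :
    (∀ t : ℕ, O (w (t + 1)) ≤ O (w t)) ∧ (∀ t : ℕ, 0 ≤ O (w t)) ∧
    ∃ L : ℝ, 0 ≤ L ∧
      Filter.Tendsto (fun t : ℕ => O (w t)) Filter.atTop (nhds L) := by
  obtain rfl : O = cappedRidgeLoss x r ε ζ := funext hO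
  obtain rfl : u = fun t => capWeight x r ε (w t) := funext fun t => funext (hu t)
  have descent (t : ℕ) : cappedRidgeLoss x r ε ζ (w (t + 1)) ≤ cappedRidgeLoss x r ε ζ (w t) :=
    cappedRidgeLoss_le_of_weightedRidgeLoss_le <|
      weightedRidgeLoss_le_of_ofLp_eq_ridgeMatrix_inv_mulVec x (capWeight_nonneg (w t)) hζ r
        (hw t) (w t)
  have nonneg (t : ℕ) : 0 ≤ cappedRidgeLoss x r ε ζ (w t) :=
    cappedRidgeLoss_nonneg hε.le hζ.le (w t)
  exact ⟨descent, nonneg, ⨅ t, cappedRidgeLoss x r ε ζ (w t), le_ciInf nonneg,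
    tendsto_atTop_ciInf (antitone_nat_of_succ_le descent) ⟨0, by rintro _ ⟨t, rfl⟩; exact nonneg t⟩⟩

/-- the capped-ℓ2 objective values along the reweighted iteration
are nonincreasing, nonnegative, and converge to a limit L ≥ 0. -/
theorem stmt_16 (d M : ℕ) (hd : 0 < d) (hM : 0 < M)
    (x : Fin M → EuclideanSpace ℝ (Fin d)) (r : Fin M → ℝ)
    (ζ ε : ℝ) (hζ : 0 < ζ) (hε : 0 < ε)
    (O : EuclideanSpace ℝ (Fin d) → ℝ)
    (hO : ∀ w', O w' = (∑ i, min ((r i - ⟪x i, w'⟫) ^ 2) ε) + ζ * ‖w'‖ ^ 2)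
    (w : ℕ → EuclideanSpace ℝ (Fin d)) (u : ℕ → Fin M → ℝ)
    (hu : ∀ t i, u t i = if (r i - ⟪x i, w t⟫) ^ 2 < ε then 1 else 0)
    (hw : ∀ t, w (t + 1) =
      ((∑ i, u t i • Matrix.vecMulVec (x i) (x i)) +
        ζ • (1 : Matrix (Fin d) (Fin d) ℝ))⁻¹.mulVec (∑ i, u t i • r i • x i)) :
    (∀ t : ℕ, O (w (t + 1)) ≤ O (w t)) ∧ (∀ t : ℕ, 0 ≤ O (w t)) ∧
    ∃ L : ℝ, 0 ≤ L ∧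
      Filter.Tendsto (fun t : ℕ => O (w t)) Filter.atTop (nhds L) :=
  stmt_16_general d M x r ζ ε hζ hε O hO w u hu hw
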